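/- Let W : ℕ → {a, b} be an infinite word with T_W(n) = n + 1 for all n ≥ 1 (a Sturmian word). Then the density of the letter a in W, defined as the limit ρ(a) = lim_{n→∞} |W(0)W(1)⋯W(n−1)|_a / n, exists and is an irrational number. -/

import Mathlib

/-- The factor of the infinite word `W` of length `n` occurring at position `i`. -/
def factorAt {A : Type*} (W : ℕ → A) (i n : ℕ) : List A :=
  (List.range n).map (fun j => W (i + j))

/-- `u` is a factor of the infinite word `W`. -/
def IsFactor {A : Type*} (W : ℕ → A) (u : List A) : Prop :=
  ∃ i : ℕ, u = factorAt W i u.length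

/-- The complexity function: the number of distinct factors of `W` of length `n`. -/
noncomputable def complexity {A : Type*} (W : ℕ → A) (n : ℕ) : ℕ :=
  Set.ncard {u : List A | u.length = n ∧ IsFactor W u}

/-!
A Sturmian word is not eventually periodic, since eventually periodic words have bounded
complexity. By the Morse–Hedlund argument all its factors therefore recur, and counting one-letter
extensions shows that it has exactly one right special and one left special factor of each length.

An unbalanced binary word contains `0 w 0` and `1 w 1` for some palindrome `w`. In a Sturmian
word this is impossible: if `w` is a power of a letter, recurrence forces the word to be
constant; otherwise, writing `c w` for the right special factor of length `|w| + 1`, the factor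
`c w c̄` occurs, and the next occurrence of `c w` after it lies within `|w|` positions, because the
windows in between are pairwise distinct and avoid three factors of that length. This overlap of
two copies of the palindrome `w` turns the letter `c̄` into `c`.

For a balanced word `n ↦ |W(0) ⋯ W(n-1)|_a` is additive up to `1`, hence by Fekete's lemma within
`1` of `n ρ`; this gives the density `ρ`. If `ρ = p / q`, the deviations of the windows of length
`q` from `p` have bounded partial sums and, by balance, a constant sign, so they eventually
vanish and the word is eventually `q`-periodic.
-/

lemma Bool.toNat_injective : Function.Injective Bool.toNat := by
  intro a b h
  cases a <;> cases b <;> simp_all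

lemma List.eq_and_eq_replicate_of_cons_eq_append_singleton {α : Type*} {a b : α} :
    ∀ {w : List α}, a :: w = w ++ [b] → a = b ∧ w = List.replicate w.length a
  | [], h => by simpa using h
  | x :: w, h => by
    obtain ⟨rfl, h⟩ := List.cons.inj h
    obtain ⟨rfl, hw⟩ := List.eq_and_eq_replicate_of_cons_eq_append_singleton h
    exact ⟨rfl, by rw [List.length_cons, List.replicate_succ, ← hw]⟩

lemma Finset.card_eq_card_add_card_filter_of_bool_ext {α : Type*} [DecidableEq α]
    {F G : Finset α} (e : Bool → α → α) (he : ∀ b b' u u', e b u = e b' u' → b = b' ∧ u = u')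
    (hG : ∀ v ∈ G, ∃ b, ∃ u ∈ F, e b u = v) (hF : ∀ u ∈ F, ∃ b, e b u ∈ G) :
    G.card = F.card + (F.filter fun u => ∀ b, e b u ∈ G).card := by
  set E : Bool → Finset α := fun b => F.filter (e b · ∈ G)
  have hsplit : G = (E false).image (e false) ∪ (E true).image (e true) := by
    ext v
    simp only [E, Finset.mem_union, Finset.mem_image, Finset.mem_filter]
    constructor
    · intro hv
      obtain ⟨b, u, hu, rfl⟩ := hG v hv
      cases b
      · exact Or.inl ⟨u, ⟨hu, hv⟩, rfl⟩
      · exact Or.inr ⟨u, ⟨hu, hv⟩, rfl⟩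
    · rintro (⟨u, ⟨-, hv⟩, rfl⟩ | ⟨u, ⟨-, hv⟩, rfl⟩) <;> exact hv
  have hdisj : Disjoint ((E false).image (e false)) ((E true).image (e true)) := by
    refine Finset.disjoint_left.2 fun v hv hv' => ?_
    obtain ⟨u, -, rfl⟩ := Finset.mem_image.1 hv
    obtain ⟨u', -, hu'⟩ := Finset.mem_image.1 hv'
    exact absurd (he _ _ _ _ hu').1 (by decide)
  have hunion : E false ∪ E true = F := by
    ext u
    simp only [E, ← Finset.filter_or, Finset.mem_filter, and_iff_left_iff_imp]
    intro hu
    obtain ⟨b, hb⟩ := hF u hu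
    cases b
    · exact Or.inl hb
    · exact Or.inr hb
  have hinter : E false ∩ E true = F.filter fun u => ∀ b, e b u ∈ G := by
    ext u
    simp [E, Bool.forall_bool, and_and_and_comm]
  conv_lhs => rw [hsplit]
  rw [Finset.card_union_of_disjoint hdisj,
    Finset.card_image_of_injOn fun u _ u' _ h => (he _ _ _ _ h).2,
    Finset.card_image_of_injOn fun u _ u' _ h => (he _ _ _ _ h).2,
    ← Finset.card_union_add_card_inter, hunion, hinter]

lemma Finset.card_add_card_le_of_injOn {α β : Type*} [DecidableEq β] {s : Finset α}
    {F T : Finset β} (f : α → β) (hT : T ⊆ F) (hf : ∀ a ∈ s, f a ∈ F ∧ f a ∉ T)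
    (hinj : Set.InjOn f s) : s.card + T.card ≤ F.card := by
  have h := Finset.card_le_card_of_injOn f (fun a ha => Finset.mem_sdiff.2 (hf a ha)) hinj
  rw [Finset.card_sdiff_of_subset hT] at h
  have := Finset.card_le_card hT
  omega

/-! ### Factors -/

section Factors

variable {A : Type*} (W : ℕ → A)

@[simp]
lemma length_factorAt (i n : ℕ) : (factorAt W i n).length = n := by
  simp [factorAt]

lemma factorAt_eq_factorAt_iff {i j n : ℕ} :
    factorAt W i n = factorAt W j n ↔ ∀ t < n, W (i + t) = W (j + t) := by
  simp [List.ext_getElem_iff, factorAt]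

lemma factorAt_add (i m k : ℕ) :
    factorAt W i (m + k) = factorAt W i m ++ factorAt W (i + m) k := by
  simp only [factorAt, List.range_add, List.map_append, List.map_map]
  congr 1
  exact List.map_congr_left fun t _ => by simp [Nat.add_assoc]

lemma factorAt_succ (i n : ℕ) : factorAt W i (n + 1) = factorAt W i n ++ [W (i + n)] := by
  rw [factorAt_add]
  simp [factorAt]

lemma factorAt_succ' (i n : ℕ) : factorAt W i (n + 1) = W i :: factorAt W (i + 1) n := by
  rw [Nat.add_comm, factorAt_add]
  simp [factorAt]

lemma factorAt_shift (N i n : ℕ) : factorAt (fun t => W (N + t)) i n = factorAt W (N + i) n := by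
  simp [factorAt, Nat.add_assoc]

variable {W}

lemma factorAt_succ_eq_cons_iff {x k : ℕ} {a : A} {u : List A} :
    factorAt W x (k + 1) = a :: u ↔ W x = a ∧ factorAt W (x + 1) k = u := by
  rw [factorAt_succ', List.cons.injEq]

lemma factorAt_succ_eq_append_singleton_iff {x k : ℕ} {a : A} {u : List A} :
    factorAt W x (k + 1) = u ++ [a] ↔ factorAt W x k = u ∧ W (x + k) = a := by
  rw [factorAt_succ]
  constructor
  · intro h
    obtain ⟨h₁, h₂⟩ := List.append_inj' h rfl
    exact ⟨h₁, List.singleton_inj.1 h₂⟩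
  · rintro ⟨rfl, rfl⟩
    rfl

lemma factorAt_add_one_eq_of_eq {x y k : ℕ} (hxy : factorAt W x k = factorAt W y k)
    (hnext : W (x + k) = W (y + k)) : factorAt W (x + 1) k = factorAt W (y + 1) k := by
  have h : factorAt W x (k + 1) = factorAt W y (k + 1) := by
    rw [factorAt_succ, hxy, hnext, ← factorAt_succ]
  rw [factorAt_succ', factorAt_succ'] at h
  exact (List.cons.inj h).2

lemma apply_add_length_eq_of_palindrome {w : List A} (hpal : w.reverse = w) {p q : ℕ}
    (hp : factorAt W p w.length = w) (hq : factorAt W q w.length = w) (hpq : p < q)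
    (hqn : q ≤ p + w.length) : W (p + w.length) = W (q - 1) := by
  have hshift := (factorAt_eq_factorAt_iff W).1 (hp.trans hq.symm)
  have hmirror : ∀ t < w.length, W (p + (w.length - 1 - t)) = W (p + t) := by
    intro t ht
    rw [← hp] at hpal
    have h := congrArg (·[t]?) hpal
    rw [List.getElem?_reverse (by rwa [length_factorAt]), length_factorAt] at h
    simpa [factorAt, ht, show w.length - 1 - t < w.length by omega] using h
  calc W (p + w.length) = W (q + (w.length - (q - p))) := by congr 1; omega
    _ = W (p + (w.length - (q - p))) := (hshift _ (by omega)).symm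
    _ = W (p + (q - p - 1)) := by rw [← hmirror _ (by omega)]; congr 2; omega
    _ = W (q - 1) := by congr 1; omega

variable (W) in
lemma isFactor_factorAt (i n : ℕ) : IsFactor W (factorAt W i n) :=
  ⟨i, by rw [length_factorAt]⟩

lemma IsFactor.of_isInfix {u v : List A} (hv : IsFactor W v) (huv : u <:+: v) : IsFactor W u := by
  obtain ⟨s, t, rfl⟩ := huv
  obtain ⟨i, hi⟩ := hv
  refine ⟨i + s.length, ?_⟩
  rw [List.length_append, List.length_append, factorAt_add, factorAt_add] at hi
  exact (List.append_inj (List.append_inj hi (by simp)).1 (by simp)).2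

lemma IsFactor.of_append_left {u v : List A} (h : IsFactor W (u ++ v)) : IsFactor W u :=
  h.of_isInfix (List.prefix_append u v).isInfix

lemma IsFactor.of_cons {a : A} {u : List A} (h : IsFactor W (a :: u)) : IsFactor W u :=
  h.of_isInfix (List.suffix_cons a u).isInfix

variable (W) in
lemma finite_setOf_isFactor [Finite A] (n : ℕ) :
    {u : List A | u.length = n ∧ IsFactor W u}.Finite :=
  (List.finite_length_eq A n).subset fun _ hu => hu.1

variable (W) in
noncomputable def factors [Finite A] (n : ℕ) : Finset (List A) :=
  (finite_setOf_isFactor W n).toFinset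

variable [Finite A]

lemma mem_factors {u : List A} {n : ℕ} : u ∈ factors W n ↔ u.length = n ∧ IsFactor W u := by
  simp [factors]

lemma mem_factors_iff_exists {u : List A} {n : ℕ} :
    u ∈ factors W n ↔ ∃ i, factorAt W i n = u := by
  rw [mem_factors]
  constructor
  · rintro ⟨rfl, i, hi⟩
    exact ⟨i, hi.symm⟩
  · rintro ⟨i, rfl⟩
    exact ⟨length_factorAt W i n, isFactor_factorAt W i n⟩

variable (W)

lemma factorAt_mem_factors (i n : ℕ) : factorAt W i n ∈ factors W n :=
  mem_factors_iff_exists.2 ⟨i, rfl⟩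

lemma card_factors (n : ℕ) : (factors W n).card = complexity W n := by
  rw [complexity, factors, Set.ncard_eq_toFinset_card _ (finite_setOf_isFactor W n)]

lemma complexity_zero : complexity W 0 = 1 := by
  rw [← card_factors, Finset.card_eq_one]
  refine ⟨[], Finset.eq_singleton_iff_unique_mem.2 ⟨factorAt_mem_factors W 0 0, fun u hu => ?_⟩⟩
  exact List.eq_nil_of_length_eq_zero (mem_factors.1 hu).1

end Factors

/-! ### Eventually periodic words -/

def IsEventuallyPeriodic {A : Type*} (W : ℕ → A) : Prop :=
  ∃ i₀ p : ℕ, 0 < p ∧ ∀ x, i₀ ≤ x → W (x + p) = W x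

section Periodicity

variable {A : Type*} {W : ℕ → A}

lemma apply_add_mul_of_periodic {i₀ p : ℕ} (hW : ∀ x, i₀ ≤ x → W (x + p) = W x) {x : ℕ}
    (hx : i₀ ≤ x) (k : ℕ) : W (x + k * p) = W x := by
  induction k with
  | zero => simp
  | succ k ih => rw [Nat.succ_mul, ← Nat.add_assoc, hW _ (by omega), ih]

/-- Every factor of an eventually periodic word already occurs before position `i₀ + p`. -/
lemma IsEventuallyPeriodic.exists_complexity_le (hW : IsEventuallyPeriodic W) :
    ∃ C, ∀ n, complexity W n ≤ C := by
  classical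
  obtain ⟨i₀, p, hp, hper⟩ := hW
  refine ⟨i₀ + p, fun n => ?_⟩
  have hsub : {u : List A | u.length = n ∧ IsFactor W u} ⊆
      (Finset.range (i₀ + p)).image (factorAt W · n) := by
    rintro u ⟨rfl, x, hx⟩
    rw [hx, length_factorAt]
    simp only [Finset.coe_image, Finset.coe_range, Set.mem_image, Set.mem_Iio]
    rcases lt_or_ge x (i₀ + p) with hx | hx
    · exact ⟨x, hx, rfl⟩
    refine ⟨i₀ + (x - i₀) % p, by have := Nat.mod_lt (x - i₀) hp; omega, ?_⟩
    refine (factorAt_eq_factorAt_iff W).2 fun t _ => ?_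
    have hx' : x + t = i₀ + (x - i₀) % p + t + (x - i₀) / p * p := by
      have := Nat.mod_add_div' (x - i₀) p
      omega
    rw [hx', apply_add_mul_of_periodic hper (by omega)]
  calc complexity W n ≤ ((Finset.range (i₀ + p)).image (factorAt W · n)).card := by
        rw [← Set.ncard_coe_finset]
        exact Set.ncard_le_ncard hsub (Finset.finite_toSet _)
    _ ≤ i₀ + p := Finset.card_image_le.trans (by simp)

lemma isEventuallyPeriodic_of_shift {N : ℕ} (hW : IsEventuallyPeriodic fun t => W (N + t)) :
    IsEventuallyPeriodic W := by
  obtain ⟨i₀, p, hp, hper⟩ := hW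
  refine ⟨N + i₀, p, hp, fun x hx => ?_⟩
  have := hper (x - N) (by omega)
  simp only at this
  rwa [show N + (x - N + p) = x + p by omega, show N + (x - N) = x by omega] at this

/-- By pigeonhole two windows of length `m` coincide, and from then on they stay equal. -/
lemma isEventuallyPeriodic_of_next_determined [Finite A] (m : ℕ)
    (hdet : ∀ x y, factorAt W x m = factorAt W y m → W (x + m) = W (y + m)) :
    IsEventuallyPeriodic W := by
  obtain ⟨x, y, hxy, hwin⟩ := Set.Finite.exists_lt_map_eq_of_forall_mem
    (f := (factorAt W · m)) (fun i => factorAt_mem_factors W i m) (factors W m).finite_toSet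
  have hagree : ∀ t, factorAt W (x + t) m = factorAt W (y + t) m := by
    intro t
    induction t with
    | zero => exact hwin
    | succ t ih => exact factorAt_add_one_eq_of_eq ih (hdet _ _ ih)
  have hletter : ∀ t, W (x + t) = W (y + t) := by
    intro t
    rcases lt_or_ge t m with ht | ht
    · exact (factorAt_eq_factorAt_iff W).1 hwin t ht
    · have := hdet _ _ (hagree (t - m))
      rwa [Nat.add_assoc, Nat.add_assoc, Nat.sub_add_cancel ht] at this
  refine ⟨x, y - x, by omega, fun z hz => ?_⟩
  rw [show z = x + (z - x) by omega, hletter]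
  congr 1
  omega

/-- Morse–Hedlund: `take m` maps the factors of length `m + 1` onto those of length `m`; if it
does not increase their number it is injective, so each window determines its next letter. -/
theorem isEventuallyPeriodic_of_complexity_succ_le [Finite A] {m : ℕ}
    (h : complexity W (m + 1) ≤ complexity W m) : IsEventuallyPeriodic W := by
  rw [← card_factors, ← card_factors] at h
  have htake : ∀ i, (factorAt W i (m + 1)).take m = factorAt W i m := fun i => by
    rw [factorAt_succ, List.take_left' (length_factorAt W i m)]
  have hinj := Finset.inj_on_of_surj_on_of_card_le (fun v _ => v.take m)
    (fun v hv => by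
      obtain ⟨i, rfl⟩ := mem_factors_iff_exists.1 hv
      exact htake i ▸ factorAt_mem_factors W i m)
    (fun u hu => by
      obtain ⟨i, rfl⟩ := mem_factors_iff_exists.1 hu
      exact ⟨_, factorAt_mem_factors W i (m + 1), htake i⟩) h
  refine isEventuallyPeriodic_of_next_determined m fun x y hxy => ?_
  have := hinj (factorAt_mem_factors W x (m + 1)) (factorAt_mem_factors W y (m + 1))
    (by simp only [htake, hxy])
  exact (factorAt_succ_eq_append_singleton_iff.1 (this.trans (factorAt_succ W y m))).2

lemma le_complexity_of_not_isEventuallyPeriodic [Finite A] (hW : ¬ IsEventuallyPeriodic W)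
    (n : ℕ) : n + 1 ≤ complexity W n := by
  induction n with
  | zero => rw [complexity_zero]
  | succ n ih =>
    have := mt (isEventuallyPeriodic_of_complexity_succ_le (m := n)) hW
    omega

/-- A suffix `W (N + ·)` missing a factor of length `n` would have complexity at most `n`. -/
lemma exists_factorAt_eq_of_complexity_eq [Finite A] (hW : ¬ IsEventuallyPeriodic W) {n : ℕ}
    (hn : complexity W n = n + 1) (i N : ℕ) : ∃ x, N ≤ x ∧ factorAt W x n = factorAt W i n := by
  set V : ℕ → A := fun t => W (N + t)
  have hsub : factors V n ⊆ factors W n := by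
    intro u hu
    obtain ⟨x, rfl⟩ := mem_factors_iff_exists.1 hu
    rw [factorAt_shift]
    exact factorAt_mem_factors W (N + x) n
  have hcard : (factors W n).card ≤ (factors V n).card := by
    rw [card_factors, card_factors, hn]
    exact le_complexity_of_not_isEventuallyPeriodic (mt isEventuallyPeriodic_of_shift hW) n
  obtain ⟨x, hx⟩ := mem_factors_iff_exists.1 <|
    (Finset.eq_of_subset_of_card_le hsub hcard).symm ▸ factorAt_mem_factors W i n
  exact ⟨N + x, by omega, by rw [← hx, factorAt_shift]⟩

end Periodicity

/-! ### Special factors of Sturmian words -/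

def IsSturmian (W : ℕ → Bool) : Prop :=
  ∀ n : ℕ, 1 ≤ n → complexity W n = n + 1

def IsRightSpecial (W : ℕ → Bool) (u : List Bool) : Prop :=
  ∀ b, IsFactor W (u ++ [b])

def IsLeftSpecial (W : ℕ → Bool) (u : List Bool) : Prop :=
  ∀ b, IsFactor W (b :: u)

section SpecialFactors

variable {W : ℕ → Bool}

lemma isRightSpecial_of {u : List Bool} {b : Bool} (h : IsFactor W (u ++ [b]))
    (h' : IsFactor W (u ++ [!b])) : IsRightSpecial W u :=
  (Bool.forall_bool' b).2 ⟨h, h'⟩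

lemma IsRightSpecial.isFactor {u : List Bool} (h : IsRightSpecial W u) : IsFactor W u :=
  (h true).of_append_left

lemma IsLeftSpecial.isFactor {u : List Bool} (h : IsLeftSpecial W u) : IsFactor W u :=
  (h true).of_cons

lemma IsRightSpecial.of_cons {a : Bool} {u : List Bool} (h : IsRightSpecial W (a :: u)) :
    IsRightSpecial W u :=
  fun b => (h b).of_cons

lemma IsLeftSpecial.of_append {u v : List Bool} (h : IsLeftSpecial W (u ++ v)) :
    IsLeftSpecial W u :=
  fun b => IsFactor.of_append_left (v := v) (h b)

lemma apply_eq_of_factorAt_eq_of_not_isRightSpecial {x y m : ℕ}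
    (hxy : factorAt W x m = factorAt W y m) (hx : ¬ IsRightSpecial W (factorAt W x m)) :
    W (x + m) = W (y + m) := by
  by_contra hne
  refine hx (isRightSpecial_of (b := W (x + m)) ?_ ?_)
  · rw [← factorAt_succ]
    exact isFactor_factorAt W x (m + 1)
  · rw [← Bool.eq_not_iff.2 (Ne.symm hne), hxy, ← factorAt_succ]
    exact isFactor_factorAt W y (m + 1)

open Classical in
lemma complexity_succ_eq_of_bool_ext (n : ℕ) (e : Bool → List Bool → List Bool)
    (he : ∀ b b' u u', e b u = e b' u' → b = b' ∧ u = u')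
    (hlen : ∀ b u, (e b u).length = u.length + 1)
    (hsplit : ∀ v ∈ factors W (n + 1), ∃ b, ∃ u ∈ factors W n, e b u = v)
    (hext : ∀ u ∈ factors W n, ∃ b, IsFactor W (e b u)) :
    complexity W (n + 1) = complexity W n +
      ((factors W n).filter fun u => ∀ b, IsFactor W (e b u)).card := by
  have hmem : ∀ u ∈ factors W n, ∀ b, e b u ∈ factors W (n + 1) ↔ IsFactor W (e b u) :=
    fun u hu b => by simp [mem_factors, hlen, (mem_factors.1 hu).1]
  rw [← card_factors, ← card_factors, Finset.card_eq_card_add_card_filter_of_bool_ext e he hsplit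
    fun u hu => (hext u hu).imp fun b hb => (hmem u hu b).2 hb]
  congr 2
  exact Finset.filter_congr fun u hu => forall_congr' (hmem u hu)

end SpecialFactors

namespace IsSturmian

variable {W : ℕ → Bool}

lemma complexity_eq (hW : IsSturmian W) (n : ℕ) : complexity W n = n + 1 := by
  rcases n with _ | n
  · exact complexity_zero W
  · exact hW _ (by omega)

lemma not_isEventuallyPeriodic (hW : IsSturmian W) : ¬ IsEventuallyPeriodic W := fun hp => by
  obtain ⟨C, hC⟩ := hp.exists_complexity_le
  have := hC C
  rw [hW.complexity_eq] at this
  omega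

lemma exists_factorAt_eq (hW : IsSturmian W) (i n N : ℕ) :
    ∃ x, N ≤ x ∧ factorAt W x n = factorAt W i n :=
  exists_factorAt_eq_of_complexity_eq hW.not_isEventuallyPeriodic (hW.complexity_eq n) i N

lemma existsUnique_isRightSpecial (hW : IsSturmian W) (n : ℕ) :
    ∃! u, u ∈ factors W n ∧ IsRightSpecial W u := by
  classical
  have hcard := complexity_succ_eq_of_bool_ext (W := W) n (fun b u => u ++ [b])
    (fun b b' u u' h => by
      obtain ⟨rfl, hb⟩ := List.append_inj' h rfl
      exact ⟨List.singleton_inj.1 hb, rfl⟩)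
    (fun b u => by simp)
    (fun v hv => by
      obtain ⟨i, rfl⟩ := mem_factors_iff_exists.1 hv
      exact ⟨_, _, factorAt_mem_factors W i n, (factorAt_succ W i n).symm⟩)
    (fun u hu => by
      obtain ⟨i, rfl⟩ := mem_factors_iff_exists.1 hu
      exact ⟨_, factorAt_succ W i n ▸ isFactor_factorAt W i (n + 1)⟩)
  rw [hW.complexity_eq, hW.complexity_eq] at hcard
  simpa only [Finset.mem_filter, IsRightSpecial] using
    Finset.card_eq_one_iff_existsUnique.1 (by omega :
      ((factors W n).filter fun u => ∀ b, IsFactor W (u ++ [b])).card = 1)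

/-- Left extensions are counted like right ones, since by recurrence every factor has one. -/
lemma existsUnique_isLeftSpecial (hW : IsSturmian W) (n : ℕ) :
    ∃! u, u ∈ factors W n ∧ IsLeftSpecial W u := by
  classical
  have hcard := complexity_succ_eq_of_bool_ext (W := W) n (fun b u => b :: u)
    (fun b b' u u' h => List.cons.inj h)
    (fun b u => by simp)
    (fun v hv => by
      obtain ⟨i, rfl⟩ := mem_factors_iff_exists.1 hv
      exact ⟨_, _, factorAt_mem_factors W (i + 1) n, (factorAt_succ' W i n).symm⟩)
    (fun u hu => by
      obtain ⟨i, rfl⟩ := mem_factors_iff_exists.1 hu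
      obtain ⟨x, hx, hxi⟩ := hW.exists_factorAt_eq i n 1
      have hcons := factorAt_succ' W (x - 1) n
      rw [Nat.sub_add_cancel hx, hxi] at hcons
      exact ⟨W (x - 1), hcons ▸ isFactor_factorAt W (x - 1) (n + 1)⟩)
  rw [hW.complexity_eq, hW.complexity_eq] at hcard
  simpa only [Finset.mem_filter, IsLeftSpecial] using
    Finset.card_eq_one_iff_existsUnique.1 (by omega :
      ((factors W n).filter fun u => ∀ b, IsFactor W (b :: u)).card = 1)

lemma exists_isRightSpecial (hW : IsSturmian W) (n : ℕ) :
    ∃ u, u.length = n ∧ IsRightSpecial W u :=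
  (hW.existsUnique_isRightSpecial n).exists.imp fun _ hu => ⟨(mem_factors.1 hu.1).1, hu.2⟩

lemma exists_isLeftSpecial (hW : IsSturmian W) (n : ℕ) :
    ∃ u, u.length = n ∧ IsLeftSpecial W u :=
  (hW.existsUnique_isLeftSpecial n).exists.imp fun _ hu => ⟨(mem_factors.1 hu.1).1, hu.2⟩

lemma eq_of_isRightSpecial (hW : IsSturmian W) {u v : List Bool} (huv : u.length = v.length)
    (hu : IsRightSpecial W u) (hv : IsRightSpecial W v) : u = v :=
  (hW.existsUnique_isRightSpecial v.length).unique
    ⟨mem_factors.2 ⟨huv, hu.isFactor⟩, hu⟩ ⟨mem_factors.2 ⟨rfl, hv.isFactor⟩, hv⟩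

lemma eq_of_isLeftSpecial (hW : IsSturmian W) {u v : List Bool} (huv : u.length = v.length)
    (hu : IsLeftSpecial W u) (hv : IsLeftSpecial W v) : u = v :=
  (hW.existsUnique_isLeftSpecial v.length).unique
    ⟨mem_factors.2 ⟨huv, hu.isFactor⟩, hu⟩ ⟨mem_factors.2 ⟨rfl, hv.isFactor⟩, hv⟩

lemma exists_isRightSpecial_cons (hW : IsSturmian W) {w : List Bool} (hw : IsRightSpecial W w) :
    ∃ c, IsRightSpecial W (c :: w) := by
  obtain ⟨r, hr, hrRS⟩ := hW.exists_isRightSpecial (w.length + 1)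
  cases r with
  | nil => simp at hr
  | cons c r =>
    refine ⟨c, ?_⟩
    rwa [hW.eq_of_isRightSpecial (by simpa using hr) hrRS.of_cons hw] at hrRS

lemma exists_isLeftSpecial_append (hW : IsSturmian W) {w : List Bool} (hw : IsLeftSpecial W w) :
    ∃ c, IsLeftSpecial W (w ++ [c]) := by
  obtain ⟨l, hl, hlLS⟩ := hW.exists_isLeftSpecial (w.length + 1)
  obtain rfl | ⟨l, c, rfl⟩ := l.eq_nil_or_concat'
  · simp at hl
  · refine ⟨c, ?_⟩
    rwa [hW.eq_of_isLeftSpecial (by simpa using hl) hlLS.of_append hw] at hlLS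

end IsSturmian

/-! ### Balance -/

def countAt (W : ℕ → Bool) (i n : ℕ) : ℕ :=
  (factorAt W i n).count true

def IsBalanced (W : ℕ → Bool) : Prop :=
  ∀ n i j, countAt W i n ≤ countAt W j n + 1

section Count

variable (W : ℕ → Bool)

lemma countAt_add (i m k : ℕ) : countAt W i (m + k) = countAt W i m + countAt W (i + m) k := by
  rw [countAt, countAt, countAt, factorAt_add, List.count_append]

lemma countAt_succ (i n : ℕ) : countAt W i (n + 1) = countAt W i n + (W (i + n)).toNat := by
  rw [countAt, countAt, factorAt_succ, List.count_append]
  cases W (i + n) <;> simp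

lemma countAt_succ' (i n : ℕ) : countAt W i (n + 1) = (W i).toNat + countAt W (i + 1) n := by
  rw [Nat.add_comm n, countAt_add, countAt, factorAt_succ' W i 0]
  cases W i <;> simp [factorAt]

lemma countAt_add_two (i n : ℕ) :
    countAt W i (n + 2) = (W i).toNat + countAt W (i + 1) n + (W (i + 1 + n)).toNat := by
  rw [countAt_succ', countAt_succ, ← Nat.add_assoc]

lemma countAt_le (i n : ℕ) : countAt W i n ≤ n :=
  List.count_le_length.trans (length_factorAt W i n).le

variable {W}

lemma countAt_congr {i j n : ℕ} (h : ∀ t < n, W (i + t) = W (j + t)) :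
    countAt W i n = countAt W j n := by
  rw [countAt, countAt, (factorAt_eq_factorAt_iff W).2 h]

lemma countAt_eq_of_reverse {i j n : ℕ} (h : ∀ t < n, W (j + t) = W (i + (n - 1 - t))) :
    countAt W j n = countAt W i n := by
  have : factorAt W j n = (factorAt W i n).reverse :=
    List.ext_getElem (by simp) fun t ht _ => by
      simp only [length_factorAt] at ht
      simp [List.getElem_reverse, factorAt, h t ht]
  rw [countAt, countAt, this, List.count_reverse]

end Count

section UnbalancedPair

variable {W : ℕ → Bool} {m i j : ℕ}

lemma unbalancedPair_ends (hbal : ∀ k < m + 2, ∀ a b, countAt W a k ≤ countAt W b k + 1)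
    (hij : countAt W j (m + 2) + 2 ≤ countAt W i (m + 2)) :
    W i = true ∧ W j = false ∧ W (i + 1 + m) = true ∧ W (j + 1 + m) = false := by
  have hi : countAt W i (m + 2) = _ := countAt_succ W i (m + 1)
  have hj : countAt W j (m + 2) = _ := countAt_succ W j (m + 1)
  have hi' : countAt W i (m + 2) = _ := countAt_succ' W i (m + 1)
  have hj' : countAt W j (m + 2) = _ := countAt_succ' W j (m + 1)
  rw [show i + (m + 1) = i + 1 + m by omega] at hi
  rw [show j + (m + 1) = j + 1 + m by omega] at hj
  have hpre := hbal (m + 1) (by omega) i j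
  have hsuf := hbal (m + 1) (by omega) (i + 1) (j + 1)
  have := Bool.toNat_le (W i)
  have := Bool.toNat_le (W j)
  have := Bool.toNat_le (W (i + 1 + m))
  have := Bool.toNat_le (W (j + 1 + m))
  simp only [← Bool.toNat_eq_one, ← Bool.toNat_eq_zero]
  omega

lemma unbalancedPair_middle_eq (hbal : ∀ k < m + 2, ∀ a b, countAt W a k ≤ countAt W b k + 1)
    (hij : countAt W j (m + 2) + 2 ≤ countAt W i (m + 2)) :
    factorAt W (i + 1) m = factorAt W (j + 1) m := by
  obtain ⟨hi, hj, -⟩ := unbalancedPair_ends hbal hij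
  suffices ∀ t ≤ m, factorAt W (i + 1) t = factorAt W (j + 1) t from this m le_rfl
  intro t
  induction t with
  | zero => intro _; rfl
  | succ t ih =>
    intro ht
    have hpre := ih (by omega)
    rw [factorAt_succ, factorAt_succ, hpre]
    congr 2
    apply Bool.toNat_injective
    -- compare both the prefixes of length `t + 2` and the suffixes of length `m - t`
    have hC : countAt W (i + 1) t = countAt W (j + 1) t := by rw [countAt, countAt, hpre]
    have ei := countAt_add_two W i t
    have ej := countAt_add_two W j t
    have si := countAt_add W i (t + 2) (m - t)
    have sj := countAt_add W j (t + 2) (m - t)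
    rw [show t + 2 + (m - t) = m + 2 by omega] at si sj
    have bpre := hbal (t + 2) (by omega) i j
    have bsuf := hbal (m - t) (by omega) (i + (t + 2)) (j + (t + 2))
    rw [hi] at ei
    rw [hj] at ej
    simp only [Bool.toNat_true, Bool.toNat_false] at ei ej
    omega

/-- The first `s` letters of the middle are mirrored at its end, so the factors of length `s + 2`
starting at the two ends of `1 w 1` and of `0 w 0` are comparable. -/
lemma unbalancedPair_middle_mirror
    (hbal : ∀ k < m + 2, ∀ a b, countAt W a k ≤ countAt W b k + 1)
    (hij : countAt W j (m + 2) + 2 ≤ countAt W i (m + 2)) {s : ℕ} (hs : s < m - 1 - s)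
    (ih : ∀ r < s, W (i + 1 + r) = W (i + 1 + (m - 1 - r))) :
    W (i + 1 + s) = W (i + 1 + (m - 1 - s)) := by
  obtain ⟨hi, hj, hil, hjl⟩ := unbalancedPair_ends hbal hij
  have hmid := (factorAt_eq_factorAt_iff W).1 (unbalancedPair_middle_eq hbal hij)
  apply Bool.toNat_injective
  have hrev : countAt W (i + 1 + (m - s)) s = countAt W (i + 1) s :=
    countAt_eq_of_reverse fun r hr => by
      rw [ih (s - 1 - r) (by omega)]
      congr 1
      omega
  have hsuf : countAt W (j + 1 + (m - s)) s = countAt W (i + 1 + (m - s)) s :=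
    countAt_congr fun r hr => by
      rw [Nat.add_assoc _ (m - s), Nat.add_assoc _ (m - s)]
      exact (hmid _ (by omega)).symm
  have hpre : countAt W (j + 1) s = countAt W (i + 1) s :=
    countAt_congr fun r hr => (hmid r (by omega)).symm
  have e1 := countAt_add_two W (i + 1 + (m - 1 - s)) s
  have e2 := countAt_add_two W j s
  have e3 := countAt_add_two W i s
  have e4 := countAt_add_two W (j + 1 + (m - 1 - s)) s
  rw [show i + 1 + (m - 1 - s) + 1 = i + 1 + (m - s) by omega,
    show i + 1 + (m - s) + s = i + 1 + m by omega, hil] at e1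
  rw [show j + 1 + (m - 1 - s) + 1 = j + 1 + (m - s) by omega,
    show j + 1 + (m - s) + s = j + 1 + m by omega, hjl, ← hmid _ (by omega)] at e4
  rw [hj, ← hmid _ (by omega)] at e2
  rw [hi] at e3
  have b1 := hbal (s + 2) (by omega) (i + 1 + (m - 1 - s)) j
  have b2 := hbal (s + 2) (by omega) i (j + 1 + (m - 1 - s))
  simp only [Bool.toNat_true, Bool.toNat_false] at e1 e2 e3 e4
  omega

lemma unbalancedPair_middle_reverse
    (hbal : ∀ k < m + 2, ∀ a b, countAt W a k ≤ countAt W b k + 1)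
    (hij : countAt W j (m + 2) + 2 ≤ countAt W i (m + 2)) :
    (factorAt W (i + 1) m).reverse = factorAt W (i + 1) m := by
  suffices hpal : ∀ s < m, W (i + 1 + s) = W (i + 1 + (m - 1 - s)) by
    refine List.ext_getElem (by simp) fun s hs _ => ?_
    simp only [List.length_reverse, length_factorAt] at hs
    simp [List.getElem_reverse, factorAt, hpal s hs]
  intro s
  induction s using Nat.strong_induction_on with
  | _ s ih =>
    intro hs
    rcases lt_trichotomy (m - 1 - s) s with hlt | heq | hgt
    · rw [ih _ hlt (by omega), show m - 1 - (m - 1 - s) = s by omega]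
    · rw [heq]
    · exact unbalancedPair_middle_mirror hbal hij hgt fun r hr => ih r hr (by omega)

end UnbalancedPair

/-- A shortest pair of factors whose numbers of `true` differ by two has the form
`1 w 1`, `0 w 0` with `w` a palindrome. -/
theorem exists_palindrome_of_not_isBalanced {W : ℕ → Bool} (hW : ¬ IsBalanced W) :
    ∃ w : List Bool, w.reverse = w ∧ ∀ b, IsFactor W (b :: w ++ [b]) := by
  classical
  have hex : ∃ n i j, countAt W j n + 2 ≤ countAt W i n := by
    simp only [IsBalanced, not_forall, not_le] at hW
    exact hW
  obtain ⟨i, j, hij⟩ := Nat.find_spec hex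
  have hbal : ∀ k < Nat.find hex, ∀ a b, countAt W a k ≤ countAt W b k + 1 :=
    fun k hk a b => by
      by_contra hc
      exact Nat.find_min hex hk ⟨a, b, by omega⟩
  obtain ⟨m, hm⟩ : ∃ m, Nat.find hex = m + 2 :=
    ⟨Nat.find hex - 2, by have := countAt_le W i (Nat.find hex); omega⟩
  rw [hm] at hij hbal
  obtain ⟨hi, hj, hil, hjl⟩ := unbalancedPair_ends hbal hij
  refine ⟨factorAt W (i + 1) m, unbalancedPair_middle_reverse hbal hij, fun b => ?_⟩
  have hcons : ∀ x, factorAt W x (m + 2) = W x :: factorAt W (x + 1) m ++ [W (x + 1 + m)] :=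
    fun x => by rw [factorAt_succ', factorAt_succ]; rfl
  cases b
  · have := isFactor_factorAt W j (m + 2)
    rwa [hcons, hj, hjl, ← unbalancedPair_middle_eq hbal hij] at this
  · have := isFactor_factorAt W i (m + 2)
    rwa [hcons, hi, hil] at this

/-! ### Sturmian words are balanced -/

section Replicate

variable {A : Type*} {W : ℕ → A}

lemma apply_add_eq_of_factorAt_eq_replicate {x k : ℕ} {e : A}
    (hx : factorAt W x (k + 1) = List.replicate (k + 1) e)
    (hno : ∀ a ≠ e, ¬ IsFactor W (List.replicate (k + 1) e ++ [a])) (t : ℕ) : W (x + t) = e := by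
  suffices h : ∀ t, factorAt W (x + t) (k + 1) = List.replicate (k + 1) e from
    (factorAt_succ_eq_cons_iff.1 (h t)).1
  intro t
  induction t with
  | zero => exact hx
  | succ t ih =>
    have hnext : W (x + t + (k + 1)) = e := by
      by_contra hne
      refine hno _ hne ?_
      rw [← ih, ← factorAt_succ]
      exact isFactor_factorAt W _ _
    have h := factorAt_succ W (x + t) (k + 1)
    rw [ih, hnext, ← List.replicate_succ', List.replicate_succ, factorAt_succ_eq_cons_iff] at h
    rw [← Nat.add_assoc]
    exact h.2

lemma apply_eq_of_le_of_factorAt_eq_replicate {x k : ℕ} {e : A}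
    (hx : factorAt W x (k + 1) = List.replicate (k + 1) e)
    (hno : ∀ a ≠ e, ¬ IsFactor W (a :: List.replicate (k + 1) e)) {y : ℕ} (hy : y ≤ x) :
    W y = e := by
  induction x with
  | zero =>
    rw [Nat.le_zero.1 hy]
    simpa using (factorAt_succ_eq_cons_iff.1 hx).1
  | succ x ih =>
    have hprev : W x = e := by
      by_contra hne
      refine hno _ hne ?_
      rw [← hx, ← factorAt_succ']
      exact isFactor_factorAt W _ _
    rcases Nat.lt_succ_iff_lt_or_eq.1 (Nat.lt_succ_of_le hy) with hy | rfl
    · refine ih ?_ (Nat.le_of_lt_succ hy)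
      rw [List.replicate_succ, factorAt_succ_eq_cons_iff]
      exact ⟨hprev, (factorAt_succ_eq_append_singleton_iff.1 (hx.trans List.replicate_succ')).1⟩
    · exact (factorAt_succ_eq_cons_iff.1 hx).1

end Replicate

namespace IsSturmian

variable {W : ℕ → Bool}

/-- `e^(n+1)` is right special, as otherwise `W` would end with `e e e ⋯`; so `ē e^(n+1)` is not a
factor, and by recurrence every letter of `W` is `e`. -/
lemma not_forall_isFactor_cons_replicate_append (hW : IsSturmian W) (e : Bool) (n : ℕ) :
    ¬ ∀ b, IsFactor W (b :: List.replicate n e ++ [b]) := by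
  intro hw
  have hrep : IsFactor W (List.replicate (n + 1) e ++ [e]) := by
    simpa [← List.replicate_succ, List.replicate_succ'] using hw e
  obtain ⟨x₀, hx₀⟩ := hrep.of_append_left
  rw [List.length_replicate] at hx₀
  have hRS : IsRightSpecial W (List.replicate (n + 1) e) := by
    refine isRightSpecial_of hrep ?_
    by_contra hno
    refine hW.not_isEventuallyPeriodic ⟨x₀, 1, one_pos, fun z hz => ?_⟩
    have hconst := apply_add_eq_of_factorAt_eq_replicate hx₀.symm
      (fun a ha => by rwa [Bool.eq_not_iff.2 ha])
    rw [show z + 1 = x₀ + (z + 1 - x₀) by omega, show z = x₀ + (z - x₀) by omega,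
      hconst, hconst]
  have hno : ∀ a ≠ e, ¬ IsFactor W (a :: List.replicate (n + 1) e) := by
    intro a ha h
    rw [Bool.eq_not_iff.2 ha] at h
    have hRS' : IsRightSpecial W ((!e) :: List.replicate n e) :=
      isRightSpecial_of (hw !e) (by simpa [List.replicate_succ'] using h)
    simpa [List.replicate_succ] using hW.eq_of_isRightSpecial (by simp) hRS' hRS
  obtain ⟨z, hz⟩ := hw !e
  obtain ⟨x, hxz, hx⟩ := hW.exists_factorAt_eq x₀ (n + 1) z
  have := apply_eq_of_le_of_factorAt_eq_replicate (hx.trans hx₀.symm) hno hxz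
  simp only [List.cons_append, List.length_cons] at hz
  rw [(factorAt_succ_eq_cons_iff.1 hz.symm).1] at this
  exact Bool.not_ne_self e this

lemma not_isFactor_not_cons_append (hW : IsSturmian W) {w : List Bool} {c : Bool}
    (hw : ∀ b, IsFactor W (b :: w ++ [b])) (hcRS : IsRightSpecial W (c :: w)) :
    ¬ IsFactor W ((!c) :: w ++ [c]) := fun h => by
  simpa using hW.eq_of_isRightSpecial (by simp) (isRightSpecial_of h (hw !c)) hcRS

/-- Between two consecutive occurrences of the right special factor `u`, each window of length
`|u|` determines the next one, so a repeated window would lead to an earlier occurrence of `u`. -/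
lemma factorAt_ne_factorAt_of_lt (hW : IsSturmian W) {u : List Bool} (hu : IsRightSpecial W u)
    {i j : ℕ} (hj : factorAt W j u.length = u)
    (hmin : ∀ t, i < t → t < j → factorAt W t u.length ≠ u) {s t : ℕ} (his : i < s)
    (hst : s < t) (htj : t < j) : factorAt W s u.length ≠ factorAt W t u.length := by
  intro heq
  have hstep : ∀ r ≤ j - t, factorAt W (s + r) u.length = factorAt W (t + r) u.length := by
    intro r
    induction r with
    | zero => intro _; exact heq
    | succ r ih =>
      intro hr
      replace ih := ih (by omega)
      have hnotRS : ¬ IsRightSpecial W (factorAt W (s + r) u.length) := fun hR =>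
        hmin (s + r) (by omega) (by omega) (hW.eq_of_isRightSpecial (by simp) hR hu)
      rw [← Nat.add_assoc, ← Nat.add_assoc]
      exact factorAt_add_one_eq_of_eq ih (apply_eq_of_factorAt_eq_of_not_isRightSpecial ih hnotRS)
  have := hstep (j - t) le_rfl
  rw [show t + (j - t) = j by omega, hj] at this
  exact hmin _ (by omega) (by omega) this

lemma factorAt_ne_append_singleton (hW : IsSturmian W) {w : List Bool} {c : Bool}
    (hw : ∀ b, IsFactor W (b :: w ++ [b])) (hcRS : IsRightSpecial W (c :: w)) {i j : ℕ}
    (hi : factorAt W (i + 1) (w.length + 1) = w ++ [!c])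
    (hmin : ∀ t, i < t → t < j → factorAt W t (w.length + 1) ≠ c :: w) {t : ℕ} (h₁ : i < t)
    (h₂ : t < j) : factorAt W t (w.length + 1) ≠ w ++ [c] := by
  intro ht
  have hprev : W (t - 1) = c := by
    by_contra hprev
    apply hW.not_isFactor_not_cons_append hw hcRS
    have := factorAt_succ' W (t - 1) (w.length + 1)
    rw [Nat.sub_add_cancel (by omega), ht, Bool.eq_not_iff.2 hprev] at this
    rw [List.cons_append, ← this]
    exact isFactor_factorAt W _ _
  rcases (by omega : i < t - 1 ∨ t = i + 1) with h | rfl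
  · refine hmin _ h (by omega) ?_
    rw [factorAt_succ_eq_cons_iff, Nat.sub_add_cancel (by omega)]
    exact ⟨hprev, (factorAt_succ_eq_append_singleton_iff.1 ht).1⟩
  · rw [hi] at ht
    exact Bool.not_ne_self c (List.singleton_inj.1 (List.append_inj' ht rfl).2)

lemma factorAt_ne_not_cons (hW : IsSturmian W) {w : List Bool} {c : Bool}
    (hw : ∀ b, IsFactor W (b :: w ++ [b])) (hcRS : IsRightSpecial W (c :: w))
    (hne : ∀ a, c :: w ≠ w ++ [a]) {i j : ℕ}
    (hi : factorAt W (i + 1) (w.length + 1) = w ++ [!c])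
    (hj : factorAt W j (w.length + 1) = c :: w)
    (hdist : ∀ s t, i < s → s < t → t < j →
      factorAt W s (w.length + 1) ≠ factorAt W t (w.length + 1)) {t : ℕ} (h₁ : i < t)
    (h₂ : t < j) : factorAt W t (w.length + 1) ≠ (!c) :: w := by
  intro ht
  have hnext : W (t + (w.length + 1)) = !c := by
    by_contra hnext
    apply hW.not_isFactor_not_cons_append hw hcRS
    have hc : W (t + (w.length + 1)) = c := by simpa using hnext
    rw [← ht, ← hc, ← factorAt_succ]
    exact isFactor_factorAt W _ _
  have ht1 : factorAt W (t + 1) (w.length + 1) = w ++ [!c] := by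
    rw [factorAt_succ_eq_append_singleton_iff, Nat.add_right_comm, Nat.add_assoc]
    exact ⟨(factorAt_succ_eq_cons_iff.1 ht).2, hnext⟩
  rcases (by omega : t + 1 < j ∨ t + 1 = j) with h | h
  · exact hdist (i + 1) (t + 1) (by omega) (by omega) h (hi.trans ht1.symm)
  · rw [h, hj] at ht1
    exact hne _ ht1

/-- The windows strictly between `i` and the next occurrence of `c w` are pairwise distinct and
avoid the three factors `c w`, `w c` and `c̄ w`. -/
lemma exists_factorAt_eq_cons_within_length (hW : IsSturmian W) {w : List Bool} {c : Bool}
    (hw : ∀ b, IsFactor W (b :: w ++ [b])) (hne : ∀ a, c :: w ≠ w ++ [a])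
    (hcRS : IsRightSpecial W (c :: w)) {i : ℕ}
    (hi : factorAt W (i + 1) (w.length + 1) = w ++ [!c]) :
    ∃ j, i < j ∧ j ≤ i + w.length ∧ factorAt W j (w.length + 1) = c :: w := by
  classical
  have hex : ∃ j, i < j ∧ factorAt W j (w.length + 1) = c :: w := by
    obtain ⟨y, hy⟩ := hcRS.isFactor
    obtain ⟨x, hx, hxy⟩ := hW.exists_factorAt_eq y (w.length + 1) (i + 1)
    exact ⟨x, by omega, hxy.trans hy.symm⟩
  obtain ⟨hij, hj⟩ := Nat.find_spec hex
  set j := Nat.find hex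
  have hmin : ∀ t, i < t → t < j → factorAt W t (w.length + 1) ≠ c :: w :=
    fun t h₁ h₂ h => Nat.find_min hex h₂ ⟨h₁, h⟩
  have hdist := fun s t => hW.factorAt_ne_factorAt_of_lt hcRS hj hmin (s := s) (t := t)
  have hT : ({c :: w, w ++ [c], (!c) :: w} : Finset (List Bool)).card = 3 :=
    Finset.card_eq_three.2 ⟨_, _, _, hne c, by simp, fun h => Bool.not_ne_self c
      (List.eq_and_eq_replicate_of_cons_eq_append_singleton h.symm).1, rfl⟩
  have hcount : (Finset.Ioo i j).card + 3 ≤ w.length + 2 := by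
    rw [← hT, ← hW.complexity_eq, ← card_factors]
    refine Finset.card_add_card_le_of_injOn (factorAt W · (w.length + 1)) ?_ ?_ ?_
    · simp only [Finset.insert_subset_iff, Finset.singleton_subset_iff, mem_factors]
      exact ⟨⟨rfl, hcRS.isFactor⟩, ⟨by simp, (hcRS c).of_cons⟩, ⟨rfl, (hw !c).of_append_left⟩⟩
    · intro t ht
      rw [Finset.mem_Ioo] at ht
      simp only [Finset.mem_insert, Finset.mem_singleton, not_or]
      exact ⟨factorAt_mem_factors W t _, hmin t ht.1 ht.2,
        hW.factorAt_ne_append_singleton hw hcRS hi hmin ht.1 ht.2,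
        hW.factorAt_ne_not_cons hw hcRS hne hi hj hdist ht.1 ht.2⟩
    · intro s hs t ht hst
      simp only [Finset.coe_Ioo, Set.mem_Ioo] at hs ht
      by_contra hne
      rcases Nat.lt_or_gt_of_ne hne with h | h
      · exact hdist s t hs.1 h ht.2 hst
      · exact hdist t s ht.1 h hs.2 hst.symm
  exact ⟨j, hij, by rw [Nat.card_Ioo] at hcount; omega, hj⟩

/-- The next occurrence of `c w` after an occurrence of `c w c̄` overlaps the palindrome `w`, which
turns the letter `c̄` into `c`. -/
lemma not_forall_isFactor_cons_append_of_palindrome (hW : IsSturmian W) {w : List Bool}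
    (hpal : w.reverse = w) (hnc : ∀ e, w ≠ List.replicate w.length e) :
    ¬ ∀ b, IsFactor W (b :: w ++ [b]) := by
  intro hw
  have hne : ∀ c a, c :: w ≠ w ++ [a] := fun c a h =>
    hnc c (List.eq_and_eq_replicate_of_cons_eq_append_singleton h).2
  obtain ⟨c, hcRS⟩ := hW.exists_isRightSpecial_cons fun b => (hw b).of_cons
  obtain ⟨d, hdLS⟩ := hW.exists_isLeftSpecial_append fun b => (hw b).of_append_left
  have hd : d = !c := Bool.eq_not_iff.2 fun h =>
    hW.not_isFactor_not_cons_append hw hcRS (h ▸ hdLS !c)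
  subst hd
  obtain ⟨i, hi⟩ := hdLS c
  have hi' : factorAt W i (w.length + 2) = c :: w ++ [!c] := by simpa using hi.symm
  obtain ⟨-, hi1⟩ := factorAt_succ_eq_cons_iff.1 hi'
  obtain ⟨j, hij, hji, hj⟩ := hW.exists_factorAt_eq_cons_within_length hw (hne c) hcRS hi1
  obtain ⟨hiw, hlast⟩ := factorAt_succ_eq_append_singleton_iff.1 hi1
  obtain ⟨hWj, hjw⟩ := factorAt_succ_eq_cons_iff.1 hj
  have := apply_add_length_eq_of_palindrome hpal hiw hjw (by omega) (by omega)
  rw [hlast, Nat.add_sub_cancel, hWj] at this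
  exact Bool.not_ne_self c this

theorem isBalanced (hW : IsSturmian W) : IsBalanced W := by
  by_contra hbal
  obtain ⟨w, hpal, hw⟩ := exists_palindrome_of_not_isBalanced hbal
  by_cases hc : ∃ e, w = List.replicate w.length e
  · obtain ⟨e, he⟩ := hc
    rw [he] at hw
    exact hW.not_forall_isFactor_cons_replicate_append e _ hw
  · exact hW.not_forall_isFactor_cons_append_of_palindrome hpal (not_exists.1 hc) hw

end IsSturmian

/-! ### Density -/

section Density

open Filter Topology Finset

lemma Subadditive.bddBelow_range_div_of_add_nonneg {u v : ℕ → ℝ} (hv : Subadditive v)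
    (huv : ∀ n, 0 ≤ u n + v n) : BddBelow (Set.range fun n => u n / n) := by
  refine ⟨-|v 1|, ?_⟩
  rintro _ ⟨n, rfl⟩
  rcases Nat.eq_zero_or_pos n with rfl | hn
  · simp
  have hvn : v n ≤ n * v 1 := by
    have := hv.apply_mul_add_le (n - 1) 1 1
    rwa [Nat.mul_one, Nat.sub_add_cancel hn, Nat.cast_sub hn, Nat.cast_one, sub_one_mul,
      sub_add_cancel] at this
  rw [le_div_iff₀ (by positivity)]
  nlinarith [le_abs_self (v 1), huv n]

/-- The slope is the common limit of `(a n + c) / n` and `-(c - a n) / n`, both subadditive. -/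
lemma exists_abs_sub_mul_le_of_abs_add_sub_le {a : ℕ → ℝ} {c : ℝ}
    (h : ∀ m n, |a (m + n) - a m - a n| ≤ c) : ∃ ρ, ∀ n, |a n - n * ρ| ≤ c := by
  have ha0 : |a 0| ≤ c := by simpa [abs_neg] using h 0 0
  have hc : 0 ≤ c := (abs_nonneg _).trans ha0
  have hu : Subadditive fun n => a n + c := fun m n => by
    have := (abs_le.1 (h m n)).2
    linarith
  have hg : Subadditive fun n => c - a n := fun m n => by
    have := (abs_le.1 (h m n)).1
    linarith
  have hbu := hg.bddBelow_range_div_of_add_nonneg (u := fun n => a n + c) fun n => by linarith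
  have hbg := hu.bddBelow_range_div_of_add_nonneg (u := fun n => c - a n) fun n => by linarith
  have hsum : hu.lim + hg.lim = 0 := by
    refine tendsto_nhds_unique ((hu.tendsto_lim hbu).add (hg.tendsto_lim hbg)) ?_
    refine (tendsto_const_div_atTop_nhds_zero_nat (2 * c)).congr fun n => ?_
    rw [← add_div]
    ring_nf
  refine ⟨hu.lim, fun n => ?_⟩
  rcases Nat.eq_zero_or_pos n with rfl | hn
  · simpa using ha0
  have hnr : (0 : ℝ) < n := by positivity
  have h₁ := hu.lim_le_div hbu hn.ne'
  have h₂ := hg.lim_le_div hbg hn.ne'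
  rw [le_div_iff₀ hnr] at h₁ h₂
  rw [abs_le]
  constructor <;> nlinarith

lemma tendsto_div_of_abs_sub_mul_le {a : ℕ → ℝ} {ρ c : ℝ} (h : ∀ n, |a n - n * ρ| ≤ c) :
    Tendsto (fun n => a n / n) atTop (𝓝 ρ) := by
  rw [tendsto_iff_norm_sub_tendsto_zero]
  refine squeeze_zero' (Eventually.of_forall fun n => norm_nonneg _) ?_
    (tendsto_const_div_atTop_nhds_zero_nat c)
  filter_upwards [eventually_gt_atTop 0] with n hn
  have hnr : (0 : ℝ) < n := by positivity
  rw [Real.norm_eq_abs, show a n / n - ρ = (a n - n * ρ) / n by field_simp, abs_div,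
    abs_of_pos hnr]
  exact div_le_div_of_nonneg_right (h n) hnr.le

lemma abs_sum_range_sub_le {e : ℕ → ℝ} {C : ℝ} (he : ∀ n, |e n| ≤ C) (Q N : ℕ) :
    |∑ i ∈ range N, (e (i + Q) - e i)| ≤ 2 * Q * C := by
  set E : ℕ → ℝ := fun i => ∑ t ∈ range Q, e (i + t)
  have hstep : ∀ i, E (i + 1) - E i = e (i + Q) - e i := by
    intro i
    have h₁ := sum_range_succ (fun t => e (i + t)) Q
    have h₂ := sum_range_succ' (fun t => e (i + t)) Q
    have h₃ : ∑ t ∈ range Q, e (i + (t + 1)) = ∑ t ∈ range Q, e (i + 1 + t) :=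
      sum_congr rfl fun t _ => by rw [Nat.add_comm t, Nat.add_assoc]
    simp only [Nat.add_zero] at h₂
    simp only [E]
    linarith
  have hE : ∀ i, |E i| ≤ Q * C := fun i =>
    (abs_sum_le_sum_abs _ _).trans ((sum_le_sum fun t (_ : t ∈ range Q) => he (i + t)).trans
      (by simp))
  rw [← sum_congr rfl fun i _ => hstep i, sum_range_sub]
  linarith [abs_sub (E N) (E 0), hE N, hE 0]

/-- Integers any two of which differ by at most one have a constant sign, so bounded partial sums
make them summable in absolute value. -/
lemma eventually_eq_zero_of_abs_sum_range_le {d : ℕ → ℤ} (hd : ∀ i j, d i ≤ d j + 1) {K : ℝ}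
    (hK : ∀ N, |∑ i ∈ range N, (d i : ℝ)| ≤ K) : ∀ᶠ i in atTop, d i = 0 := by
  have habs : ∀ N, ∑ i ∈ range N, |(d i : ℝ)| ≤ K := by
    by_cases hpos : ∃ i, 0 < d i
    · obtain ⟨i, hi⟩ := hpos
      intro N
      refine le_trans (le_of_eq ?_) ((le_abs_self _).trans (hK N))
      exact sum_congr rfl fun j _ => abs_of_nonneg (by have := hd i j; exact_mod_cast (by omega))
    · simp only [not_exists, not_lt] at hpos
      intro N
      refine le_trans (le_of_eq ?_) ((neg_le_abs _).trans (hK N))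
      rw [← sum_neg_distrib]
      exact sum_congr rfl fun j _ => abs_of_nonpos (by exact_mod_cast hpos j)
  have hlim := (summable_of_sum_range_le (fun i => abs_nonneg _) habs).tendsto_atTop_zero
  filter_upwards [(tendsto_order.1 hlim).2 1 one_pos] with i hi
  exact Int.abs_lt_one_iff.1 (by exact_mod_cast hi)

namespace IsBalanced

variable {W : ℕ → Bool}

lemma exists_abs_countAt_sub_mul_le (hW : IsBalanced W) :
    ∃ ρ : ℝ, ∀ n, |(countAt W 0 n : ℝ) - n * ρ| ≤ 1 :=
  exists_abs_sub_mul_le_of_abs_add_sub_le fun m n => by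
    have hadd : countAt W 0 (m + n) = countAt W 0 m + countAt W m n := by
      simpa using countAt_add W 0 m n
    have h₁ : (countAt W m n : ℝ) ≤ countAt W 0 n + 1 := by exact_mod_cast hW n m 0
    have h₂ : (countAt W 0 n : ℝ) ≤ countAt W m n + 1 := by exact_mod_cast hW n 0 m
    rw [hadd, Nat.cast_add, abs_le]
    constructor <;> linarith

/-- The deviation of the window of length `q.den` at `i` from `q.num` is the increment
`e (i + q.den) - e i` of the bounded error `e n = countAt W 0 n - n q`. -/
lemma isEventuallyPeriodic_of_abs_countAt_sub_mul_le (hW : IsBalanced W) {q : ℚ}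
    (h : ∀ n, |(countAt W 0 n : ℝ) - n * q| ≤ 1) : IsEventuallyPeriodic W := by
  set d : ℕ → ℤ := fun i => countAt W i q.den - q.num
  have hq : (q.den : ℝ) * q = q.num := by
    rw [Rat.cast_def]
    field_simp
  have hd : ∀ i, (d i : ℝ) = (countAt W 0 (i + q.den) - (i + q.den : ℕ) * q) -
      (countAt W 0 i - i * q) := by
    intro i
    have := countAt_add W 0 i q.den
    rw [Nat.zero_add] at this
    simp only [d, this]
    push_cast
    linarith
  have hev := eventually_eq_zero_of_abs_sum_range_le (d := d)
    (fun i j => by have := hW q.den i j; simp only [d]; omega)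
    (fun N => by simp_rw [hd]; exact abs_sum_range_sub_le h q.den N)
  obtain ⟨i₀, hi₀⟩ := eventually_atTop.1 hev
  refine ⟨i₀, q.den, q.pos, fun x hx => ?_⟩
  have h₁ := hi₀ x hx
  have h₂ := hi₀ (x + 1) (by omega)
  have s₁ := countAt_succ W x q.den
  have s₂ := countAt_succ' W x q.den
  simp only [d] at h₁ h₂
  apply Bool.toNat_injective
  omega

end IsBalanced

end Density

/-- For a Sturmian word over `Bool` (`true = a`, `false = b`), the density of the
letter `a` exists and is irrational. -/
theorem stmt9 (W : ℕ → Bool) (h : ∀ n : ℕ, 1 ≤ n → complexity W n = n + 1) :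
    ∃ ρ : ℝ, Irrational ρ ∧
      Filter.Tendsto (fun n : ℕ => ((factorAt W 0 n).count true : ℝ) / n)
        Filter.atTop (nhds ρ) := by
  have hW : IsSturmian W := h
  obtain ⟨ρ, hρ⟩ := hW.isBalanced.exists_abs_countAt_sub_mul_le
  refine ⟨ρ, ?_, tendsto_div_of_abs_sub_mul_le hρ⟩
  rintro ⟨q, rfl⟩
  exact hW.not_isEventuallyPeriodic
    (hW.isBalanced.isEventuallyPeriodic_of_abs_countAt_sub_mul_le hρ)
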